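/- Let X : [0,T] → ℝⁿ be continuous. Define the discrete roughness D_θ(X) = inf over unit vectors φ, over n ≥ 1, and over k ≤ 2ⁿ of sup_{s,t ∈ I_{k,n}} |⟨φ, X_t − X_s⟩| / (2^{-n}T)^θ, where I_{k,n} = [(k−1)2^{-n}T, k·2^{-n}T]. Then the modulus of θ-Hölder roughness satisfies L_θ(X) ≥ D_θ(X) / (2·8^θ). -/

import Mathlib

open Set

/-- The modulus of `θ`-Hölder roughness of `X` on `[0,T]`:
`L_θ(X) = inf_{‖φ‖=1} inf_{t∈[0,T]} inf_{r∈(0,T/2]} sup_{r/2 ≤ |t−s| ≤ r} |⟨φ, δX_{st}⟩|/r^θ`. -/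
noncomputable def Lmod (n : ℕ) (θ T : ℝ) (X : ℝ → EuclideanSpace ℝ (Fin n)) : ℝ :=
  sInf {a | ∃ φ : EuclideanSpace ℝ (Fin n), ‖φ‖ = 1 ∧
    ∃ t ∈ Icc (0:ℝ) T, ∃ r ∈ Ioc (0:ℝ) (T/2),
      a = sSup {b | ∃ s ∈ Icc (0:ℝ) T, r/2 ≤ |t - s| ∧ |t - s| ≤ r ∧
        b = |(inner ℝ φ (X t - X s) : ℝ)| / r ^ θ}}

/-- The discrete roughness
`D_θ(X) = inf_{‖φ‖=1} inf_{N ≥ 1} inf_{1 ≤ k ≤ 2^N} sup_{s,t ∈ I_{k,N}} |⟨φ, δX_{st}⟩|/(2^{-N}T)^θ`,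
where `I_{k,N} = [(k−1)·2^{-N}·T, k·2^{-N}·T]`. -/
noncomputable def Dmod (n : ℕ) (θ T : ℝ) (X : ℝ → EuclideanSpace ℝ (Fin n)) : ℝ :=
  sInf {a | ∃ φ : EuclideanSpace ℝ (Fin n), ‖φ‖ = 1 ∧
    ∃ N : ℕ, 1 ≤ N ∧ ∃ k : ℕ, 1 ≤ k ∧ k ≤ 2 ^ N ∧
      a = sSup {b | ∃ s ∈ Icc (((k:ℝ) - 1) * T / 2 ^ N) ((k:ℝ) * T / 2 ^ N),
            ∃ u ∈ Icc (((k:ℝ) - 1) * T / 2 ^ N) ((k:ℝ) * T / 2 ^ N),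
              b = |(inner ℝ φ (X u - X s) : ℝ)| / (T / 2 ^ N) ^ θ}}

/-- The modulus of `θ`-Hölder roughness is bounded below by the discrete roughness:
`L_θ(X) ≥ D_θ(X)/(2·8^θ)`. -/
theorem stmt4 (n : ℕ) (θ T : ℝ) (hθ : θ ∈ Ioo (0:ℝ) 1) (hT : 0 < T)
    (X : ℝ → EuclideanSpace ℝ (Fin n)) (hX : Continuous X) :
    Dmod n θ T X / (2 * (8:ℝ) ^ θ) ≤ Lmod n θ T X := by
  obtain ⟨hθ0, hθ1⟩ := hθ
  have hc : (0:ℝ) < 2 * (8:ℝ) ^ θ := by positivity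
  by_cases hφe : ∃ φ : EuclideanSpace ℝ (Fin n), ‖φ‖ = 1
  swap
  · have hL : Lmod n θ T X = 0 := by
      unfold Lmod
      convert Real.sInf_empty using 2
      ext a
      simp only [mem_setOf_eq, mem_empty_iff_false, iff_false, not_exists]
      intro φ hφ
      exact absurd ⟨φ, hφ.1⟩ hφe
    have hD : Dmod n θ T X = 0 := by
      unfold Dmod
      convert Real.sInf_empty using 2
      ext a
      simp only [mem_setOf_eq, mem_empty_iff_false, iff_false, not_exists]
      intro φ hφ
      exact absurd ⟨φ, hφ.1⟩ hφe
    rw [hL, hD]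
    simp
  obtain ⟨φ₀, hφ₀⟩ := hφe
  obtain ⟨C, hC⟩ := (isCompact_Icc (a := (0:ℝ)) (b := T)).exists_bound_of_continuousOn
    hX.continuousOn
  -- lower-boundedness of the Dmod index set
  have hDbdd : BddBelow {a | ∃ φ : EuclideanSpace ℝ (Fin n), ‖φ‖ = 1 ∧
      ∃ N : ℕ, 1 ≤ N ∧ ∃ k : ℕ, 1 ≤ k ∧ k ≤ 2 ^ N ∧
        a = sSup {b | ∃ s ∈ Icc (((k:ℝ) - 1) * T / 2 ^ N) ((k:ℝ) * T / 2 ^ N),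
              ∃ u ∈ Icc (((k:ℝ) - 1) * T / 2 ^ N) ((k:ℝ) * T / 2 ^ N),
                b = |(inner ℝ φ (X u - X s) : ℝ)| / (T / 2 ^ N) ^ θ}} := by
    refine ⟨0, ?_⟩
    rintro a ⟨φ, hφ, N, hN, k, hk, hk2, rfl⟩
    apply Real.sSup_nonneg
    rintro b ⟨s, hs, u, hu, rfl⟩
    positivity
  apply le_csInf
  · exact ⟨_, φ₀, hφ₀, 0, ⟨le_rfl, hT.le⟩, T/2, ⟨by positivity, le_rfl⟩, rfl⟩
  rintro a ⟨φ, hφ, t, ht, r, ⟨hr0, hrT⟩, rfl⟩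
  set SL := {b | ∃ s ∈ Icc (0:ℝ) T, r/2 ≤ |t - s| ∧ |t - s| ≤ r ∧
        b = |(inner ℝ φ (X t - X s) : ℝ)| / r ^ θ} with hSL
  have hrθ : (0:ℝ) < r ^ θ := Real.rpow_pos_of_pos hr0 θ
  have hSLbdd : BddAbove SL := by
    refine ⟨(C + C) / r ^ θ, ?_⟩
    rintro b ⟨s, hs, -, -, rfl⟩
    have h1 : |(inner ℝ φ (X t - X s) : ℝ)| ≤ ‖φ‖ * ‖X t - X s‖ := abs_real_inner_le_norm _ _
    have h2 : ‖X t - X s‖ ≤ ‖X t‖ + ‖X s‖ := norm_sub_le _ _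
    have h3 : ‖X t‖ ≤ C := hC t ht
    have h4 : ‖X s‖ ≤ C := hC s hs
    rw [hφ, one_mul] at h1
    have hnum : |(inner ℝ φ (X t - X s) : ℝ)| ≤ C + C := by linarith
    gcongr
  set aL := sSup SL with haL
  have haL0 : 0 ≤ aL := by
    apply Real.sSup_nonneg
    rintro b ⟨s, hs, -, -, rfl⟩
    positivity
  -- the key estimate: good points give inner products bounded by aL * r^θ
  have hkey : ∀ s ∈ Icc (0:ℝ) T, r/2 ≤ |t - s| → |t - s| ≤ r →
      |(inner ℝ φ (X t - X s) : ℝ)| ≤ aL * r ^ θ := by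
    intro s hs h1 h2
    have : |(inner ℝ φ (X t - X s) : ℝ)| / r ^ θ ≤ aL :=
      le_csSup hSLbdd ⟨s, hs, h1, h2, rfl⟩
    calc |(inner ℝ φ (X t - X s) : ℝ)| = |(inner ℝ φ (X t - X s) : ℝ)| / r ^ θ * r ^ θ :=
          (div_mul_cancel₀ _ hrθ.ne').symm
      _ ≤ aL * r ^ θ := mul_le_mul_of_nonneg_right this hrθ.le
  -- geometry: a dyadic-friendly subinterval of good points
  obtain ⟨a₀, ha₀0, ha₀T, ha₀good⟩ : ∃ a₀ : ℝ, 0 ≤ a₀ ∧ a₀ + r/2 ≤ T ∧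
      ∀ s, a₀ ≤ s → s ≤ a₀ + r/2 → r/2 ≤ |t - s| ∧ |t - s| ≤ r := by
    rcases le_or_gt (t + r) T with hcase | hcase
    · refine ⟨t + r/2, by have := ht.1; linarith, by linarith, fun s h1 h2 => ?_⟩
      rw [abs_sub_comm, abs_of_nonneg (by linarith)]
      constructor <;> linarith
    · have h1 : r ≤ t := by have := ht.2; linarith
      refine ⟨t - r, by linarith, by have := ht.2; linarith, fun s h1 h2 => ?_⟩
      rw [abs_of_nonneg (by linarith)]
      constructor <;> linarith
  -- choose the dyadic level
  have hx : (1:ℝ) ≤ 4 * T / r := by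
    rw [le_div_iff₀ hr0]; linarith
  obtain ⟨m, hm1, hm2⟩ := exists_nat_pow_near hx one_lt_two
  set N := m + 1 with hN
  have h2N : (0:ℝ) < 2 ^ N := by positivity
  set h := T / 2 ^ N with hh
  have hhpos : 0 < h := by positivity
  have hhle : h ≤ r / 4 := by
    rw [hh, div_le_div_iff₀ h2N (by norm_num)]
    rw [div_lt_iff₀ hr0] at hm2
    have : (2:ℝ) ^ (m+1) = 2 ^ N := by rw [hN]
    nlinarith
  have hrle : r ≤ 8 * h := by
    rw [le_div_iff₀ hr0] at hm1
    have h2 : (2:ℝ) ^ N = 2 * 2 ^ m := by rw [hN]; ring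
    rw [hh, ← mul_div_assoc, le_div_iff₀ h2N, h2]
    nlinarith
  -- choose k
  set k := ⌈a₀ / h⌉₊ + 1 with hk
  have hceil1 : a₀ / h ≤ (⌈a₀ / h⌉₊ : ℝ) := Nat.le_ceil _
  have hceil2 : (⌈a₀ / h⌉₊ : ℝ) < a₀ / h + 1 := Nat.ceil_lt_add_one (by positivity)
  have hklo : a₀ ≤ ((k:ℝ) - 1) * T / 2 ^ N := by
    have : ((k:ℝ) - 1) * T / 2 ^ N = (⌈a₀ / h⌉₊ : ℝ) * h := by
      rw [hk]; push_cast; rw [hh]; ring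
    rw [this]
    calc a₀ = a₀ / h * h := (div_mul_cancel₀ a₀ hhpos.ne').symm
      _ ≤ (⌈a₀ / h⌉₊ : ℝ) * h := mul_le_mul_of_nonneg_right hceil1 hhpos.le
  have hkhi : (k:ℝ) * T / 2 ^ N ≤ a₀ + r / 2 := by
    have e : (k:ℝ) * T / 2 ^ N = ((⌈a₀ / h⌉₊ : ℝ) + 1) * h := by
      rw [hk]; push_cast; rw [hh]; ring
    rw [e]
    have h1 : ((⌈a₀ / h⌉₊ : ℝ) + 1) * h ≤ (a₀ / h + 2) * h :=
      mul_le_mul_of_nonneg_right (by linarith) hhpos.le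
    have e2 : (a₀ / h + 2) * h = a₀ + 2 * h := by
      rw [add_mul, div_mul_cancel₀ a₀ hhpos.ne']
    linarith
  have hk2N : k ≤ 2 ^ N := by
    have hle : (k:ℝ) * h ≤ (2:ℝ) ^ N * h := by
      have : (2:ℝ) ^ N * h = T := by rw [hh]; field_simp
      rw [this]
      have : (k:ℝ) * T / 2 ^ N = (k:ℝ) * h := by rw [hh]; ring
      linarith [hkhi, ha₀T, this ▸ hkhi]
    have : (k:ℝ) ≤ (2:ℝ) ^ N := le_of_mul_le_mul_right hle hhpos
    exact_mod_cast this
  -- the discrete term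
  have hmem : sSup {b | ∃ s ∈ Icc (((k:ℝ) - 1) * T / 2 ^ N) ((k:ℝ) * T / 2 ^ N),
            ∃ u ∈ Icc (((k:ℝ) - 1) * T / 2 ^ N) ((k:ℝ) * T / 2 ^ N),
              b = |(inner ℝ φ (X u - X s) : ℝ)| / (T / 2 ^ N) ^ θ} ∈
      {a | ∃ φ : EuclideanSpace ℝ (Fin n), ‖φ‖ = 1 ∧
      ∃ N : ℕ, 1 ≤ N ∧ ∃ k : ℕ, 1 ≤ k ∧ k ≤ 2 ^ N ∧
        a = sSup {b | ∃ s ∈ Icc (((k:ℝ) - 1) * T / 2 ^ N) ((k:ℝ) * T / 2 ^ N),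
              ∃ u ∈ Icc (((k:ℝ) - 1) * T / 2 ^ N) ((k:ℝ) * T / 2 ^ N),
                b = |(inner ℝ φ (X u - X s) : ℝ)| / (T / 2 ^ N) ^ θ}} :=
    ⟨φ, hφ, N, Nat.le_add_left 1 m, k, Nat.le_add_left 1 _, hk2N, rfl⟩
  have hDle : Dmod n θ T X ≤ sSup {b | ∃ s ∈ Icc (((k:ℝ) - 1) * T / 2 ^ N) ((k:ℝ) * T / 2 ^ N),
            ∃ u ∈ Icc (((k:ℝ) - 1) * T / 2 ^ N) ((k:ℝ) * T / 2 ^ N),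
              b = |(inner ℝ φ (X u - X s) : ℝ)| / (T / 2 ^ N) ^ θ} :=
    csInf_le hDbdd hmem
  -- bound the discrete sup
  have hhθ : (0:ℝ) < (T / 2 ^ N) ^ θ := Real.rpow_pos_of_pos (by positivity) θ
  have hrpow : r ^ θ ≤ 8 ^ θ * h ^ θ := by
    calc r ^ θ ≤ (8 * h) ^ θ := Real.rpow_le_rpow hr0.le hrle hθ0.le
      _ = 8 ^ θ * h ^ θ := Real.mul_rpow (by norm_num) hhpos.le
  have hsup : sSup {b | ∃ s ∈ Icc (((k:ℝ) - 1) * T / 2 ^ N) ((k:ℝ) * T / 2 ^ N),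
            ∃ u ∈ Icc (((k:ℝ) - 1) * T / 2 ^ N) ((k:ℝ) * T / 2 ^ N),
              b = |(inner ℝ φ (X u - X s) : ℝ)| / (T / 2 ^ N) ^ θ} ≤ 2 * 8 ^ θ * aL := by
    apply Real.sSup_le
    · rintro b ⟨s, hs, u, hu, rfl⟩
      have hsI : a₀ ≤ s ∧ s ≤ a₀ + r/2 := ⟨hklo.trans hs.1, hs.2.trans hkhi⟩
      have huI : a₀ ≤ u ∧ u ≤ a₀ + r/2 := ⟨hklo.trans hu.1, hu.2.trans hkhi⟩
      have hsT : s ∈ Icc (0:ℝ) T := ⟨ha₀0.trans hsI.1, hsI.2.trans ha₀T⟩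
      have huT : u ∈ Icc (0:ℝ) T := ⟨ha₀0.trans huI.1, huI.2.trans ha₀T⟩
      obtain ⟨hs1, hs2⟩ := ha₀good s hsI.1 hsI.2
      obtain ⟨hu1, hu2⟩ := ha₀good u huI.1 huI.2
      have b1 := hkey s hsT hs1 hs2
      have b2 := hkey u huT hu1 hu2
      have hsplit : (inner ℝ φ (X u - X s) : ℝ) =
          (inner ℝ φ (X t - X s) : ℝ) - (inner ℝ φ (X t - X u) : ℝ) := by
        rw [← inner_sub_right]
        congr 1
        abel
      have habs : |(inner ℝ φ (X u - X s) : ℝ)| ≤ 2 * (aL * r ^ θ) := by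
        rw [hsplit]
        calc |(inner ℝ φ (X t - X s) : ℝ) - (inner ℝ φ (X t - X u) : ℝ)|
            ≤ |(inner ℝ φ (X t - X s) : ℝ)| + |(inner ℝ φ (X t - X u) : ℝ)| := abs_sub _ _
          _ ≤ 2 * (aL * r ^ θ) := by linarith
      rw [div_le_iff₀ hhθ]
      have h8 : aL * r ^ θ ≤ aL * (8 ^ θ * h ^ θ) :=
        mul_le_mul_of_nonneg_left hrpow haL0
      calc |(inner ℝ φ (X u - X s) : ℝ)| ≤ 2 * (aL * r ^ θ) := habs
        _ ≤ 2 * (aL * (8 ^ θ * h ^ θ)) := by linarith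
        _ = 2 * 8 ^ θ * aL * (T / 2 ^ N) ^ θ := by rw [← hh]; ring
    · exact mul_nonneg (by positivity) haL0
  calc Dmod n θ T X / (2 * 8 ^ θ) ≤ (2 * 8 ^ θ * aL) / (2 * 8 ^ θ) := by
        gcongr
        exact hDle.trans hsup
    _ = aL := by field_simp
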